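/- If α is an irrational real number equivalent to √2, then 𝔨*(α) = 𝔨(α) = 2·λ(α); in particular λ(√2) = 1/√8 and 𝔨(√2) = 𝔨*(√2) = 1/√2. -/

import Mathlib

open Filter Real Set

/-- Iterates of the Gauss map starting from `α`: `x₀ = α`, `x_{n+1} = 1 / fract (xₙ)`. -/
noncomputable def gaussIter (α : ℝ) : ℕ → ℝ
  | 0 => α
  | n + 1 => (Int.fract (gaussIter α n))⁻¹

/-- Partial quotients of the continued fraction `α = [a₀; a₁, a₂, …]`. -/
noncomputable def cfA (α : ℝ) (n : ℕ) : ℤ := ⌊gaussIter α n⌋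

/-- Denominators of convergents, with shifted index: `cfQ α 0 = q₋₁ = 0`,
`cfQ α 1 = q₀ = 1`, and `cfQ α (n+1) = qₙ` where `qₙ = aₙ q_{n-1} + q_{n-2}`. -/
noncomputable def cfQ (α : ℝ) : ℕ → ℤ
  | 0 => 0
  | 1 => 1
  | n + 2 => cfA α (n + 1) * cfQ α (n + 1) + cfQ α n

/-- Numerators of convergents, with shifted index: `cfP α 0 = p₋₁ = 1`,
`cfP α 1 = p₀ = ⌊α⌋`, and `cfP α (n+1) = pₙ` where `pₙ = aₙ p_{n-1} + p_{n-2}`. -/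
noncomputable def cfP (α : ℝ) : ℕ → ℤ
  | 0 => 1
  | 1 => ⌊α⌋
  | n + 2 => cfA α (n + 1) * cfP α (n + 1) + cfP α n

/-- `qₙ`, the denominator of the `n`-th convergent of `α`. -/
noncomputable def cfDen (α : ℝ) (n : ℕ) : ℤ := cfQ α (n + 1)

/-- `pₙ`, the numerator of the `n`-th convergent of `α`. -/
noncomputable def cfNum (α : ℝ) (n : ℕ) : ℤ := cfP α (n + 1)

/-- `ξₙ = |qₙ α − pₙ|`. -/
noncomputable def cfXi (α : ℝ) (n : ℕ) : ℝ := |(cfDen α n : ℝ) * α - (cfNum α n : ℝ)|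

/-- `ψ_α(t) = min { ‖qα‖ : q ∈ ℤ, 1 ≤ q ≤ t }`. -/
noncomputable def psiFn (α t : ℝ) : ℝ :=
  sInf {x : ℝ | ∃ p q : ℤ, 1 ≤ q ∧ (q : ℝ) ≤ t ∧ x = |(q : ℝ) * α - (p : ℝ)|}

/-- `ψ_α^[2](t)`: the same minimum but over pairs `(p,q)` that are not `(pₙ,qₙ)` for any `n ≥ 0`. -/
noncomputable def psi2Fn (α t : ℝ) : ℝ :=
  sInf {x : ℝ | ∃ p q : ℤ, 1 ≤ q ∧ (q : ℝ) ≤ t ∧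
    (∀ n : ℕ, ¬(p = cfNum α n ∧ q = cfDen α n)) ∧ x = |(q : ℝ) * α - (p : ℝ)|}

/-- `ψ_α^[2]*(t)`: the same minimum but over pairs `(p,q)` with `p/q ≠ pₙ/qₙ` for all `n ≥ 0`. -/
noncomputable def psi2sFn (α t : ℝ) : ℝ :=
  sInf {x : ℝ | ∃ p q : ℤ, 1 ≤ q ∧ (q : ℝ) ≤ t ∧
    (∀ n : ℕ, (p : ℝ) / (q : ℝ) ≠ (cfNum α n : ℝ) / (cfDen α n : ℝ)) ∧
    x = |(q : ℝ) * α - (p : ℝ)|}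

/-- `λ(α) = liminf_{t→∞} t · ψ_α(t)`. -/
noncomputable def lamOf (α : ℝ) : ℝ := Filter.liminf (fun t : ℝ => t * psiFn α t) Filter.atTop

/-- `𝔨(α) = liminf_{t→∞} t · ψ_α^[2](t)`. -/
noncomputable def kOf (α : ℝ) : ℝ := Filter.liminf (fun t : ℝ => t * psi2Fn α t) Filter.atTop

/-- `𝔨*(α) = liminf_{t→∞} t · ψ_α^[2]*(t)`. -/
noncomputable def ksOf (α : ℝ) : ℝ := Filter.liminf (fun t : ℝ => t * psi2sFn α t) Filter.atTop

/-- `α` and `β` are equivalent: `β = (aα+b)/(cα+d)` with `a,b,c,d ∈ ℤ`, `|ad − bc| = 1`. -/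
def CFEquiv (α β : ℝ) : Prop :=
  ∃ a b c d : ℤ, |a * d - b * c| = 1 ∧ β = ((a : ℝ) * α + (b : ℝ)) / ((c : ℝ) * α + (d : ℝ))

/-- The spectrum `𝕃₂ = {𝔨(α) : α irrational}`. -/
def L2 : Set ℝ := {x : ℝ | ∃ α : ℝ, Irrational α ∧ kOf α = x}

/-- The spectrum `𝕃₂* = {𝔨*(α) : α irrational}`. -/
def L2s : Set ℝ := {x : ℝ | ∃ α : ℝ, Irrational α ∧ ksOf α = x}

/-- `𝔔(α)`: the set of positive integers at which `ψ_α^[2]` is discontinuous. -/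
def QSet (α : ℝ) : Set ℤ := {m : ℤ | 0 < m ∧ ¬ ContinuousAt (psi2Fn α) (m : ℝ)}

/-- `𝔛(α)`: the set of positive integers at which `ψ_α^[2]*` is discontinuous. -/
def XSet (α : ℝ) : Set ℤ := {m : ℤ | 0 < m ∧ ¬ ContinuousAt (psi2sFn α) (m : ℝ)}

/-- The members of the list `l` are successive elements of `S`: they belong to `S`,
are listed in increasing order, and no element of `S` lies strictly between
consecutive listed ones. -/
def SuccessiveIn (S : Set ℤ) (l : List ℤ) : Prop :=
  (∀ x ∈ l, x ∈ S) ∧ l.Chain' (fun x y => x < y ∧ ∀ z ∈ S, ¬(x < z ∧ z < y))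

/-- `κ¹ₙ = (q_{n-2} + q_{n-1})(ξ_{n-2} − ξ_{n-1})`. -/
noncomputable def kap1 (α : ℝ) (n : ℕ) : ℝ :=
  ((cfDen α (n - 2) + cfDen α (n - 1) : ℤ) : ℝ) * (cfXi α (n - 2) - cfXi α (n - 1))

/-- `κ²ₙ = (qₙ − q_{n-1})(ξ_{n-1} + ξₙ)`. -/
noncomputable def kap2 (α : ℝ) (n : ℕ) : ℝ :=
  ((cfDen α n - cfDen α (n - 1) : ℤ) : ℝ) * (cfXi α (n - 1) + cfXi α n)

/-- `κ³ₙ = (2q_{n-2} + q_{n-1})(2ξ_{n-2} − ξ_{n-1})`. -/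
noncomputable def kap3 (α : ℝ) (n : ℕ) : ℝ :=
  ((2 * cfDen α (n - 2) + cfDen α (n - 1) : ℤ) : ℝ) * (2 * cfXi α (n - 2) - cfXi α (n - 1))

/-- `κ⁴ₙ = 4 q_{n-1} ξ_{n-1}`. -/
noncomputable def kap4 (α : ℝ) (n : ℕ) : ℝ :=
  ((4 * cfDen α (n - 1) : ℤ) : ℝ) * cfXi α (n - 1)

/-!
If `α` is equivalent to `√2 = [1; 2, 2, 2, …]`, Serret's theorem makes all complete quotients of
`α` from some index `N` on equal to `1 + √2`, so `aₙ = 2` for `n ≥ N`. Writing `q = a qₙ₊₁ + b qₙ`,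
`p = a pₙ₊₁ + b pₙ` gives `|qα − p| = |b (1 + √2) − a| ξₙ₊₁`, and a check of the few small
lattice points `(a, b)` shows that in the tail `ψ_α = ξₙ₊₁` on `[qₙ₊₁, qₙ₊₂)`, while
`ψ_α^[2] = ψ_α^[2]* = ξₙ − ξₙ₊₁` on `[qₙ₊₁ + qₙ, qₙ₊₂ + qₙ₊₁)`, the value being attained at
the mediant `(pₙ₊₁ + pₙ) / (qₙ₊₁ + qₙ)`. The liminf of `t ψ(t)` over such a step function is
the limit of its values at the left endpoints, and Binet's formula for `qₙ` together with
`ξₙ (qₙ (1 + √2) + qₙ₋₁) = 1` gives `qₙ ξₙ → 1/√8` and `(qₙ₊₁ + qₙ)(ξₙ − ξₙ₊₁) → 2/√8`.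
-/

open scoped Topology

lemma liminf_eq_of_eventually_ge_of_frequently_le {f : ℝ → ℝ} {L : ℝ}
    (hge : ∀ ε > 0, ∀ᶠ t in atTop, L - ε ≤ f t)
    (hle : ∀ ε > 0, ∃ᶠ t in atTop, f t ≤ L + ε) :
    liminf f atTop = L := by
  have hbdd : IsBoundedUnder (· ≥ ·) atTop f := ⟨L - 1, by simpa using hge 1 one_pos⟩
  have hcobdd : IsCoboundedUnder (· ≥ ·) atTop f := .of_frequently_le (hle 1 one_pos)
  refine le_antisymm (le_of_forall_pos_le_add fun ε hε => ?_)
    (le_of_forall_pos_le_add fun ε hε => ?_)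
  · exact liminf_le_of_frequently_le (hle ε hε) hbdd
  · linarith [le_liminf_of_le hcobdd (hge ε hε)]

lemma StrictMono.exists_le_lt_of_tendsto_atTop {s : ℕ → ℝ} (hs : StrictMono s)
    (hs_top : Tendsto s atTop atTop) {M : ℕ} {t : ℝ} (ht : s M ≤ t) :
    ∃ n, M ≤ n ∧ s n ≤ t ∧ t < s (n + 1) := by
  classical
  have hex : ∃ j, t < s j := (hs_top.eventually_gt_atTop t).exists
  obtain ⟨n, hn⟩ : ∃ n, Nat.find hex = n + 1 :=
    Nat.exists_eq_succ_of_ne_zero fun h0 => by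
      have := Nat.find_spec hex
      rw [h0] at this
      exact absurd (ht.trans_lt this) (not_lt.2 (hs.monotone (Nat.zero_le M)))
  have hlt : t < s (n + 1) := hn ▸ Nat.find_spec hex
  have hle : s n ≤ t := not_lt.1 (Nat.find_min hex (by omega))
  refine ⟨n, ?_, hle, hlt⟩
  by_contra! hnM
  exact absurd (ht.trans_lt hlt) (not_lt.2 (hs.monotone hnM))

lemma liminf_mul_eq_of_step {f : ℝ → ℝ} {s v : ℕ → ℝ} {L : ℝ}
    (hs : StrictMono s) (hs_top : Tendsto s atTop atTop)
    (hf : ∀ᶠ n in atTop, 0 ≤ v n ∧ ∀ t, s n ≤ t → t < s (n + 1) → f t = v n)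
    (hL : Tendsto (fun n => s n * v n) atTop (𝓝 L)) :
    liminf (fun t => t * f t) atTop = L := by
  apply liminf_eq_of_eventually_ge_of_frequently_le
  · intro ε hε
    obtain ⟨M, hM⟩ := eventually_atTop.1
      (hf.and (hL.eventually (Ioi_mem_nhds (show L - ε < L by linarith))))
    filter_upwards [eventually_ge_atTop (s M)] with t ht
    obtain ⟨n, hMn, hnt, htn⟩ := hs.exists_le_lt_of_tendsto_atTop hs_top ht
    obtain ⟨⟨hv, hfn⟩, hLn⟩ := hM n hMn
    rw [hfn t hnt htn]
    nlinarith
  · intro ε hε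
    refine hs_top.frequently (Eventually.frequently ?_)
    filter_upwards [hf, hL.eventually (Iio_mem_nhds (show L < L + ε by linarith))]
      with n ⟨_, hfn⟩ hLn
    rw [hfn (s n) le_rfl (hs n.lt_succ_self)]
    exact hLn.le

section ContinuedFraction

variable {α : ℝ}

lemma neg_one_pow_sq (R : Type*) [Monoid R] [HasDistribNeg R] (n : ℕ) : ((-1 : R) ^ n) ^ 2 = 1 := by
  rw [← pow_mul, mul_comm, pow_mul, neg_one_sq, one_pow]

lemma irrational_gaussIter (hα : Irrational α) : ∀ n, Irrational (gaussIter α n)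
  | 0 => hα
  | n + 1 => ((irrational_gaussIter hα n).sub_intCast _).inv

lemma gaussIter_succ_mul_fract (hα : Irrational α) (n : ℕ) :
    gaussIter α (n + 1) * Int.fract (gaussIter α n) = 1 :=
  inv_mul_cancel₀ (Int.fract_pos.2 ((irrational_gaussIter hα n).ne_int _)).ne'

lemma one_lt_gaussIter_succ (hα : Irrational α) (n : ℕ) : 1 < gaussIter α (n + 1) :=
  (one_lt_inv₀ (Int.fract_pos.2 ((irrational_gaussIter hα n).ne_int _))).2 (Int.fract_lt_one _)

lemma one_le_cfA_succ (hα : Irrational α) (n : ℕ) : 1 ≤ cfA α (n + 1) :=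
  Int.le_floor.2 (by exact_mod_cast (one_lt_gaussIter_succ hα n).le)

lemma cfDen_zero : cfDen α 0 = 1 := rfl

lemma cfDen_succ (n : ℕ) : cfDen α (n + 1) = cfA α (n + 1) * cfDen α n + cfQ α n := rfl

lemma cfDen_succ_succ (n : ℕ) :
    cfDen α (n + 2) = cfA α (n + 2) * cfDen α (n + 1) + cfDen α n := rfl

lemma cfNum_succ_succ (n : ℕ) :
    cfNum α (n + 2) = cfA α (n + 2) * cfNum α (n + 1) + cfNum α n := rfl

lemma cfQ_nonneg (hα : Irrational α) : ∀ n, 0 ≤ cfQ α n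
  | 0 => le_rfl
  | 1 => zero_le_one
  | n + 2 => by
    have := one_le_cfA_succ hα n
    have := cfQ_nonneg hα n
    have := cfQ_nonneg hα (n + 1)
    rw [cfQ]
    positivity

lemma one_le_cfDen (hα : Irrational α) : ∀ n, 1 ≤ cfDen α n
  | 0 => le_rfl
  | n + 1 => by
    rw [cfDen_succ]
    nlinarith [one_le_cfA_succ hα n, one_le_cfDen hα n, cfQ_nonneg hα n]

lemma cfDen_add_cfDen_le (hα : Irrational α) (n : ℕ) :
    cfDen α (n + 1) + cfDen α n ≤ cfDen α (n + 2) := by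
  rw [cfDen_succ_succ]
  nlinarith [one_le_cfA_succ hα (n + 1), one_le_cfDen hα (n + 1)]

lemma cfDen_mono (hα : Irrational α) : Monotone (cfDen α) := by
  refine monotone_nat_of_le_succ fun n => ?_
  cases n with
  | zero => simpa [cfDen_succ, cfDen_zero, cfQ] using one_le_cfA_succ hα 0
  | succ n => linarith [cfDen_add_cfDen_le hα n, one_le_cfDen hα n]

lemma cfDen_succ_lt_cfDen_succ_succ (hα : Irrational α) (n : ℕ) :
    cfDen α (n + 1) < cfDen α (n + 2) := by
  linarith [cfDen_add_cfDen_le hα n, one_le_cfDen hα n]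

lemma natCast_le_cfDen (hα : Irrational α) : ∀ n : ℕ, (n : ℤ) ≤ cfDen α n
  | 0 => by simp [cfDen_zero]
  | 1 => by simpa using one_le_cfDen hα 1
  | n + 2 => by
    have := natCast_le_cfDen hα (n + 1)
    have := cfDen_succ_lt_cfDen_succ_succ hα n
    push_cast at *
    omega

lemma tendsto_cfDen_atTop (hα : Irrational α) :
    Tendsto (fun n => (cfDen α n : ℝ)) atTop atTop :=
  tendsto_atTop_mono (fun n => by exact_mod_cast natCast_le_cfDen hα n)
    tendsto_natCast_atTop_atTop

lemma cfP_mul_cfQ_sub_mul (α : ℝ) : ∀ n : ℕ,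
    cfP α (n + 1) * cfQ α n - cfP α n * cfQ α (n + 1) = (-1) ^ (n + 1)
  | 0 => by simp [cfP, cfQ]
  | n + 1 => by
    rw [cfP, cfQ, pow_succ, ← cfP_mul_cfQ_sub_mul α n]
    ring

lemma cfNum_mul_cfDen_sub_mul (α : ℝ) (n : ℕ) :
    cfNum α (n + 1) * cfDen α n - cfNum α n * cfDen α (n + 1) = (-1) ^ n := by
  rw [cfNum, cfNum, cfDen, cfDen, cfP_mul_cfQ_sub_mul]
  ring

/-- `cfErr α (n + 1) = qₙ α − pₙ`, with the index shift of `cfQ` and `cfP`. -/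
noncomputable def cfErr (α : ℝ) (n : ℕ) : ℝ := (cfQ α n : ℝ) * α - cfP α n

lemma cfErr_succ_succ (n : ℕ) :
    cfErr α (n + 2) = cfA α (n + 1) * cfErr α (n + 1) + cfErr α n := by
  simp only [cfErr, cfQ, cfP]
  push_cast
  ring

lemma cfErr_succ_mul_gaussIter (hα : Irrational α) : ∀ n,
    cfErr α (n + 1) * gaussIter α (n + 1) = -cfErr α n
  | 0 => by
    have h := gaussIter_succ_mul_fract hα 0
    simp only [cfErr, cfQ, cfP, gaussIter, Int.fract] at h ⊢
    push_cast
    linear_combination h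
  | n + 1 => by
    have h : gaussIter α (n + 2) * (gaussIter α (n + 1) - cfA α (n + 1)) = 1 :=
      gaussIter_succ_mul_fract hα (n + 1)
    rw [cfErr_succ_succ]
    linear_combination gaussIter α (n + 2) * cfErr_succ_mul_gaussIter hα n - cfErr α (n + 1) * h

lemma neg_one_pow_mul_cfErr_pos (hα : Irrational α) : ∀ n, 0 < (-1 : ℝ) ^ n * cfErr α (n + 1)
  | 0 => by
    have h : 0 < Int.fract α := Int.fract_pos.2 (hα.ne_int ⌊α⌋)
    rw [Int.fract] at h
    show 0 < (-1 : ℝ) ^ 0 * (((1 : ℤ) : ℝ) * α - ⌊α⌋)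
    simpa using h
  | n + 1 => by
    have h : ((-1 : ℝ) ^ (n + 1) * cfErr α (n + 2)) * gaussIter α (n + 2) =
        (-1) ^ n * cfErr α (n + 1) := by
      rw [pow_succ]
      linear_combination (-(-1 : ℝ) ^ n) * cfErr_succ_mul_gaussIter hα (n + 1)
    have := neg_one_pow_mul_cfErr_pos hα n
    exact pos_of_mul_pos_left (h ▸ this) (zero_lt_one.trans (one_lt_gaussIter_succ hα _)).le

lemma cfXi_eq_neg_one_pow_mul (hα : Irrational α) (n : ℕ) :
    cfXi α n = (-1) ^ n * cfErr α (n + 1) := by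
  rw [← abs_of_pos (neg_one_pow_mul_cfErr_pos hα n), abs_mul, abs_neg_one_pow, one_mul]
  rfl

lemma cfDen_mul_sub_cfNum (hα : Irrational α) (n : ℕ) :
    (cfDen α n : ℝ) * α - cfNum α n = (-1) ^ n * cfXi α n := by
  rw [cfXi_eq_neg_one_pow_mul hα, ← mul_assoc, ← mul_pow, neg_one_mul, neg_neg, one_pow, one_mul]
  rfl

lemma cfXi_pos (hα : Irrational α) (n : ℕ) : 0 < cfXi α n :=
  cfXi_eq_neg_one_pow_mul hα n ▸ neg_one_pow_mul_cfErr_pos hα n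

lemma cfXi_eq_gaussIter_mul (hα : Irrational α) (n : ℕ) :
    cfXi α n = gaussIter α (n + 2) * cfXi α (n + 1) := by
  have h := congrArg abs (cfErr_succ_mul_gaussIter hα (n + 1))
  rw [abs_mul, abs_neg, abs_of_pos (zero_lt_one.trans (one_lt_gaussIter_succ hα _))] at h
  change cfXi α (n + 1) * _ = cfXi α n at h
  linarith

lemma cfXi_strictAnti (hα : Irrational α) : StrictAnti (cfXi α) :=
  strictAnti_nat_of_succ_lt fun n => by
    rw [cfXi_eq_gaussIter_mul hα n]
    nlinarith [cfXi_pos hα (n + 1), one_lt_gaussIter_succ hα (n + 1)]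

lemma cfXi_mul_eq_one (hα : Irrational α) (n : ℕ) :
    cfXi α n * (cfDen α n * gaussIter α (n + 1) + cfQ α n) = 1 := by
  have hdet : ((cfP α (n + 1) * cfQ α n - cfP α n * cfQ α (n + 1) : ℤ) : ℝ) = (-1) ^ (n + 1) := by
    rw [cfP_mul_cfQ_sub_mul]; push_cast; rfl
  push_cast at hdet
  have h := cfErr_succ_mul_gaussIter hα n
  rw [cfXi_eq_neg_one_pow_mul hα]
  simp only [cfDen, cfErr] at h ⊢
  linear_combination
    (-1 : ℝ) ^ n * (cfQ α (n + 1) : ℝ) * h - (-1 : ℝ) ^ n * hdet + neg_one_pow_sq ℝ n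

lemma exists_eq_add_cfDen_cfNum (α : ℝ) (n : ℕ) (p q : ℤ) : ∃ a b : ℤ,
    q = a * cfDen α (n + 1) + b * cfDen α n ∧ p = a * cfNum α (n + 1) + b * cfNum α n := by
  have hdet := cfNum_mul_cfDen_sub_mul α n
  refine ⟨(-1) ^ n * (p * cfDen α n - q * cfNum α n),
    (-1) ^ n * (q * cfNum α (n + 1) - p * cfDen α (n + 1)), ?_, ?_⟩
  · linear_combination (-(-1 : ℤ) ^ n * q) * hdet - q * neg_one_pow_sq ℤ n
  · linear_combination (-(-1 : ℤ) ^ n * p) * hdet - p * neg_one_pow_sq ℤ n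

lemma abs_mul_sub_eq_of_eq_add (hα : Irrational α) {n : ℕ} {p q a b : ℤ}
    (hq : q = a * cfDen α (n + 1) + b * cfDen α n)
    (hp : p = a * cfNum α (n + 1) + b * cfNum α n) :
    |(q : ℝ) * α - p| = |b * cfXi α n - a * cfXi α (n + 1)| := by
  have h : (q : ℝ) * α - p = (-1) ^ n * (b * cfXi α n - a * cfXi α (n + 1)) := by
    rw [hq, hp]
    push_cast
    linear_combination a * cfDen_mul_sub_cfNum hα (n + 1) + b * cfDen_mul_sub_cfNum hα n
  rw [h, abs_mul, abs_neg_one_pow, one_mul]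

lemma abs_mediant_mul_sub (hα : Irrational α) (n : ℕ) :
    |((cfDen α (n + 1) + cfDen α n : ℤ) : ℝ) * α - (cfNum α (n + 1) + cfNum α n : ℤ)| =
      cfXi α n - cfXi α (n + 1) := by
  rw [abs_mul_sub_eq_of_eq_add hα (a := 1) (b := 1) (by ring) (by ring)]
  simpa using (cfXi_strictAnti hα n.lt_succ_self).le

lemma isCoprime_cfNum_cfDen (α : ℝ) (n : ℕ) : IsCoprime (cfNum α n) (cfDen α n) := by
  refine ⟨-(-1) ^ n * cfDen α (n + 1), (-1) ^ n * cfNum α (n + 1), ?_⟩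
  linear_combination (-1 : ℤ) ^ n * cfNum_mul_cfDen_sub_mul α n + neg_one_pow_sq ℤ n

lemma isCoprime_mediant (α : ℝ) (n : ℕ) :
    IsCoprime (cfNum α (n + 1) + cfNum α n) (cfDen α (n + 1) + cfDen α n) := by
  refine ⟨-(-1) ^ n * cfDen α (n + 1), (-1) ^ n * cfNum α (n + 1), ?_⟩
  linear_combination (-1 : ℤ) ^ n * cfNum_mul_cfDen_sub_mul α n + neg_one_pow_sq ℤ n

lemma cfDen_ne_mediant (hα : Irrational α) {n : ℕ} (ha : 2 ≤ cfA α (n + 2)) (k : ℕ) :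
    cfDen α k ≠ cfDen α (n + 1) + cfDen α n := by
  have h0 := one_le_cfDen hα n
  have h1 := one_le_cfDen hα (n + 1)
  have h2 : cfDen α (n + 1) + cfDen α n < cfDen α (n + 2) := by
    rw [cfDen_succ_succ]; nlinarith
  intro hk
  rcases le_or_gt k (n + 1) with hkn | hkn
  · linarith [cfDen_mono hα hkn]
  · linarith [cfDen_mono hα (show n + 2 ≤ k by omega)]

lemma Int.eq_of_div_eq_div_of_isCoprime {p q p' q' : ℤ} (hq : 0 < q) (hq' : 0 < q')
    (h : IsCoprime p q) (h' : IsCoprime p' q') (hdiv : (p : ℝ) / q = p' / q') :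
    p = p' ∧ q = q' :=
  Rat.div_int_inj hq hq' (Int.isCoprime_iff_gcd_eq_one.1 h) (Int.isCoprime_iff_gcd_eq_one.1 h')
    (by exact_mod_cast hdiv)

lemma gaussIter_succ_eq_of_eq_intCast_add_inv {α x : ℝ} {m : ℕ} {b : ℤ}
    (h : gaussIter α m = b + x⁻¹) (hx : 1 < x) : gaussIter α (m + 1) = x := by
  rw [gaussIter, h, Int.fract_intCast_add,
    Int.fract_eq_self.2 ⟨(inv_pos.2 (by linarith)).le, inv_lt_one_of_one_lt₀ hx⟩, inv_inv]

end ContinuedFraction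

section Serret

lemma exists_gaussIter_eq_of_unimodular_of_denom_eq_one {x : ℝ} (hx : 1 < x) {E E' F : ℤ}
    (hF : 1 < F) (hdet : |E - E' * F| = 1) :
    ∃ m, gaussIter ((E * x + E') / (F * x + 1)) m = x := by
  have hx0 : 0 < x := by linarith
  have hF' : (2 : ℝ) ≤ F := by exact_mod_cast hF
  have hxinv : 0 < x⁻¹ := inv_pos.2 hx0
  rcases (abs_eq zero_le_one).1 hdet with hd | hd
  · -- `α = E' + 1 / (F + 1 / x)`
    have hE : (E : ℝ) = E' * F + 1 := by exact_mod_cast (by linarith : E = E' * F + 1)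
    have h1 : gaussIter ((E * x + E') / (F * x + 1)) 1 = F + x⁻¹ := by
      refine gaussIter_succ_eq_of_eq_intCast_add_inv (b := E') ?_ (by linarith)
      rw [gaussIter, hE]
      field_simp
      ring
    exact ⟨2, gaussIter_succ_eq_of_eq_intCast_add_inv (b := F) h1 hx⟩
  · -- `α = (E' - 1) + 1 / (1 + 1 / ((F - 1) + 1 / x))`
    have hE : (E : ℝ) = E' * F - 1 := by exact_mod_cast (by linarith : E = E' * F - 1)
    have hy : 1 < ((F - 1 : ℤ) : ℝ) + x⁻¹ := by push_cast; linarith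
    have h1 : gaussIter ((E * x + E') / (F * x + 1)) 1 = 1 + (((F - 1 : ℤ) : ℝ) + x⁻¹)⁻¹ := by
      refine gaussIter_succ_eq_of_eq_intCast_add_inv (b := E' - 1) ?_
        (lt_add_of_pos_right _ (inv_pos.2 (by linarith)))
      have hw : ((F : ℝ) - 1) * x + 1 ≠ 0 := by nlinarith
      have e₂ : (((F - 1 : ℤ) : ℝ) + x⁻¹)⁻¹ = x / ((F - 1) * x + 1) := by
        rw [inv_eq_iff_eq_inv, inv_div]
        push_cast
        field_simp
      have e₁ : (1 + x / ((F - 1) * x + 1))⁻¹ = ((F - 1) * x + 1) / (F * x + 1) := by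
        rw [inv_eq_iff_eq_inv, inv_div, eq_div_iff hw, add_mul, div_mul_cancel₀ _ hw]
        ring
      rw [gaussIter, e₂, e₁, hE]
      push_cast
      field_simp
      ring
    have h2 := gaussIter_succ_eq_of_eq_intCast_add_inv (b := 1) (by rw [h1]; push_cast; ring) hy
    exact ⟨3, gaussIter_succ_eq_of_eq_intCast_add_inv h2 hx⟩

-- Serret's theorem
lemma exists_gaussIter_eq_of_unimodular {x : ℝ} (hx : 1 < x) {E E' F F' : ℤ} (hF' : 1 ≤ F')
    (hFF' : F' < F) (hdet : |E * F' - E' * F| = 1) :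
    ∃ m, gaussIter ((E * x + E') / (F * x + F')) m = x := by
  induction hk : F'.toNat using Nat.strong_induction_on generalizing x E E' F F' with
  | _ k ih =>
  rcases eq_or_lt_of_le hF' with rfl | hF'1
  · simpa using exists_gaussIter_eq_of_unimodular_of_denom_eq_one hx hFF' (by simpa using hdet)
  -- one step of the Euclidean algorithm on `(F, F')`
  set b := F / F'
  set F'' := F % F'
  have hF : F = b * F' + F'' := by linarith [Int.mul_ediv_add_emod F F']
  have hb : 1 ≤ b := (Int.le_ediv_iff_mul_le (by omega)).2 (by omega)
  have hF''F' : F'' < F' := Int.emod_lt_of_pos F (by omega)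
  have hF'' : 1 ≤ F'' := by
    by_contra! h0
    have hF'' : F'' = 0 := le_antisymm (by omega) (Int.emod_nonneg F (by omega))
    have : F' ∣ 1 := hdet ▸ (dvd_abs _ _).2 ⟨E - E' * b, by rw [hF, hF'']; ring⟩
    linarith [Int.le_of_dvd one_pos this]
  have hy : 1 < (b : ℝ) + x⁻¹ :=
    lt_add_of_le_of_pos (by exact_mod_cast hb) (inv_pos.2 (by linarith))
  obtain ⟨m, hm⟩ := ih F''.toNat (by omega) hy (E := E') (E' := E - b * E') hF'' hF''F'
    (by rw [← hdet, abs_sub_comm, hF]; ring_nf) rfl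
  -- `(E x + E') / (F x + F') = (E' y + (E - b E')) / (F' y + F'')` for `y = b + 1 / x`
  refine ⟨m + 1, gaussIter_succ_eq_of_eq_intCast_add_inv (b := b) ?_ hx⟩
  rw [← hm]
  congr 1
  have hFx : (F : ℝ) * x + F' ≠ 0 := by
    have : (1 : ℝ) ≤ F' := by exact_mod_cast hF'
    have : (1 : ℝ) ≤ F := by exact_mod_cast (hF'.trans hFF'.le)
    nlinarith
  rw [div_eq_div_iff hFx (by positivity)]
  push_cast
  rw [hF]
  push_cast
  field_simp
  ring

end Serret

section SilverRatio

-- `1 + √2 = [2; 2, 2, …]` is the silver ratio.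

lemma sqrt_two_bounds : 1 < √2 ∧ √2 < 3 / 2 := by
  have := Real.sq_sqrt zero_le_two
  constructor <;> nlinarith [Real.sqrt_nonneg 2]

lemma sqrt_eight : √8 = 2 * √2 := by
  rw [show (8 : ℝ) = 2 ^ 2 * 2 by norm_num, Real.sqrt_mul' _ zero_le_two, Real.sqrt_sq zero_le_two]

lemma silver_inv : (1 + √2)⁻¹ = √2 - 1 :=
  inv_eq_of_mul_eq_one_right (by nlinarith [Real.sq_sqrt zero_le_two])

lemma floor_silver : ⌊1 + √2⌋ = 2 := by
  rw [Int.floor_eq_iff]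
  push_cast
  constructor <;> linarith [sqrt_two_bounds]

lemma gaussIter_eq_silver_of_le {α : ℝ} {N n : ℕ} (hN : gaussIter α N = 1 + √2) (hn : N ≤ n) :
    gaussIter α n = 1 + √2 := by
  induction n, hn using Nat.le_induction with
  | base => exact hN
  | succ n _ ih =>
    refine gaussIter_succ_eq_of_eq_intCast_add_inv (b := 2) ?_ (by linarith [sqrt_two_bounds])
    rw [ih, silver_inv]
    push_cast
    ring

variable {α : ℝ} {N n : ℕ}

lemma cfA_eq_two (hN : gaussIter α N = 1 + √2) (hn : N ≤ n) : cfA α n = 2 := by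
  rw [cfA, gaussIter_eq_silver_of_le hN hn, floor_silver]

lemma cfDen_succ_succ_of_silver (hN : gaussIter α N = 1 + √2) (hn : N ≤ n + 2) :
    cfDen α (n + 2) = 2 * cfDen α (n + 1) + cfDen α n := by
  rw [cfDen_succ_succ, cfA_eq_two hN hn]

lemma cfNum_succ_succ_of_silver (hN : gaussIter α N = 1 + √2) (hn : N ≤ n + 2) :
    cfNum α (n + 2) = 2 * cfNum α (n + 1) + cfNum α n := by
  rw [cfNum_succ_succ, cfA_eq_two hN hn]

lemma cfXi_eq_silver_mul (hα : Irrational α) (hN : gaussIter α N = 1 + √2) (hn : N ≤ n + 2) :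
    cfXi α n = (1 + √2) * cfXi α (n + 1) := by
  rw [cfXi_eq_gaussIter_mul hα, gaussIter_eq_silver_of_le hN hn]

lemma abs_mul_sub_eq_silver (hα : Irrational α) (hN : gaussIter α N = 1 + √2) (hn : N ≤ n + 2)
    {p q a b : ℤ} (hq : q = a * cfDen α (n + 1) + b * cfDen α n)
    (hp : p = a * cfNum α (n + 1) + b * cfNum α n) :
    |(q : ℝ) * α - p| = |b * (1 + √2) - a| * cfXi α (n + 1) := by
  rw [abs_mul_sub_eq_of_eq_add hα hq hp, cfXi_eq_silver_mul hα hN hn,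
    ← abs_of_pos (cfXi_pos hα (n + 1)), ← abs_mul, abs_of_pos (cfXi_pos hα (n + 1))]
  ring_nf

end SilverRatio

section SqrtTwo

lemma gaussIter_sqrt_two_one : gaussIter √2 1 = 1 + √2 :=
  gaussIter_succ_eq_of_eq_intCast_add_inv (b := 1) (by rw [silver_inv]; simp [gaussIter])
    (by linarith [sqrt_two_bounds])

lemma sqrt_two_mul_silver_add (k : ℕ) :
    √2 * (cfDen √2 (k + 1) * (1 + √2) + cfDen √2 k) =
      cfNum √2 (k + 1) * (1 + √2) + cfNum √2 k := by
  have h := cfErr_succ_mul_gaussIter irrational_sqrt_two (k + 1)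
  rw [gaussIter_eq_silver_of_le gaussIter_sqrt_two_one (by omega)] at h
  simp only [cfErr, cfDen, cfNum] at h ⊢
  linear_combination h

lemma abs_cfDen_sqrt_two_mul_sub_le (k : ℕ) :
    |(cfDen √2 k : ℝ) * √2 - cfNum √2 k| ≤ 1 / 2 := by
  have h0 : cfXi √2 0 = √2 - 1 := by
    have hp : cfNum √2 0 = 1 := by
      simp only [cfNum, cfP, Int.floor_eq_iff]
      constructor <;> norm_num
    rw [cfXi, hp, cfDen_zero]
    push_cast
    rw [one_mul, abs_of_pos (by linarith [sqrt_two_bounds])]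
  rw [cfDen_mul_sub_cfNum irrational_sqrt_two, abs_mul, abs_neg_one_pow, one_mul,
    abs_of_pos (cfXi_pos irrational_sqrt_two k)]
  linarith [(cfXi_strictAnti irrational_sqrt_two).antitone k.zero_le, sqrt_two_bounds]

lemma two_mul_cfDen_sqrt_two_le (k : ℕ) : 2 * cfDen √2 k ≤ cfDen √2 (k + 1) := by
  rw [cfDen_succ, cfA_eq_two gaussIter_sqrt_two_one (by omega)]
  linarith [cfQ_nonneg irrational_sqrt_two k]

end SqrtTwo

section SqrtTwoClass

lemma exists_gaussIter_eq_silver_of_eq_div {α : ℝ} {A B C D : ℤ} (hdet : |A * D - B * C| = 1)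
    (hW : 0 < C * √2 + D) (hα : α = (A * √2 + B) / (C * √2 + D)) :
    ∃ m, gaussIter α m = 1 + √2 := by
  obtain ⟨k, hk⟩ : ∃ k, |(C : ℝ)| + 1 ≤ cfDen √2 k * (C * √2 + D) :=
    (((tendsto_cfDen_atTop irrational_sqrt_two).atTop_mul_const hW).eventually_ge_atTop _).exists
  -- Substituting `√2 = (p₁ (1 + √2) + p₀) / (q₁ (1 + √2) + q₀)` (convergents of `√2` of
  -- index `k`, `k + 1`) gives `α = (E (1 + √2) + E') / (F (1 + √2) + F')` with
  -- `F' = q₀ W − C (q₀ √2 − p₀)` and `F = q₁ W − C (q₁ √2 − p₁)`, where `W = C √2 + D`;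
  -- as `|q √2 − p| ≤ 1/2`, `F > F' ≥ 1` once `q₀ W ≥ |C| + 1`.
  set q₀ := cfDen √2 k
  set q₁ := cfDen √2 (k + 1)
  set p₀ := cfNum √2 k
  set p₁ := cfNum √2 (k + 1)
  have hCe₀ := abs_le.1 <| (abs_mul (C : ℝ) _).trans_le <|
    mul_le_mul_of_nonneg_left (abs_cfDen_sqrt_two_mul_sub_le k) (abs_nonneg _)
  have hCe₁ := abs_le.1 <| (abs_mul (C : ℝ) _).trans_le <|
    mul_le_mul_of_nonneg_left (abs_cfDen_sqrt_two_mul_sub_le (k + 1)) (abs_nonneg _)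
  have hq : 2 * (q₀ : ℝ) ≤ q₁ := by exact_mod_cast two_mul_cfDen_sqrt_two_le k
  have hF' : 1 ≤ C * p₀ + D * q₀ := by
    have : (1 : ℝ) ≤ C * p₀ + D * q₀ := by nlinarith [abs_nonneg (C : ℝ)]
    exact_mod_cast this
  have hFF' : C * p₀ + D * q₀ < C * p₁ + D * q₁ := by
    have : (C * p₀ + D * q₀ : ℝ) < C * p₁ + D * q₁ := by nlinarith [abs_nonneg (C : ℝ)]
    exact_mod_cast this
  have hdet' :
      |(A * p₁ + B * q₁) * (C * p₀ + D * q₀) - (A * p₀ + B * q₀) * (C * p₁ + D * q₁)| = 1 := by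
    rw [← hdet, show (A * p₁ + B * q₁) * (C * p₀ + D * q₀) - (A * p₀ + B * q₀) * (C * p₁ + D * q₁) =
      (A * D - B * C) * (p₁ * q₀ - p₀ * q₁) by ring, cfNum_mul_cfDen_sub_mul, abs_mul,
      abs_neg_one_pow, mul_one]
  obtain ⟨m, hm⟩ := exists_gaussIter_eq_of_unimodular (x := 1 + √2)
    (by linarith [sqrt_two_bounds]) hF' hFF' hdet'
  refine ⟨m, hα ▸ hm ▸ ?_⟩
  have hF'R : (1 : ℝ) ≤ (C * p₀ + D * q₀ : ℤ) := by exact_mod_cast hF'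
  have hFR : (1 : ℝ) ≤ (C * p₁ + D * q₁ : ℤ) := by exact_mod_cast hF'.trans hFF'.le
  have hden : 0 < ((C * p₁ + D * q₁ : ℤ) : ℝ) * (1 + √2) + (C * p₀ + D * q₀ : ℤ) :=
    add_pos (mul_pos (by linarith) (by positivity)) (by linarith)
  congr 1
  rw [div_eq_div_iff hW.ne' hden.ne']
  push_cast
  linear_combination ((A : ℝ) * D - B * C) * sqrt_two_mul_silver_add k

lemma exists_gaussIter_eq_silver {α : ℝ} (h : CFEquiv α √2) : ∃ N, gaussIter α N = 1 + √2 := by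
  obtain ⟨a, b, c, d, hdet, hα⟩ := h
  have hcd : (c : ℝ) * α + d ≠ 0 := by
    intro h0
    rw [h0, div_zero] at hα
    linarith [sqrt_two_bounds]
  have hα' : α * (c * √2 - a) = b - d * √2 := by
    rw [eq_div_iff hcd] at hα
    linear_combination hα
  have hca : (c : ℝ) * √2 - a ≠ 0 := by
    intro h0
    obtain rfl : c = 0 := by
      by_contra hc
      exact (irrational_sqrt_two.intCast_mul hc).ne_int a (by linarith)
    obtain rfl : a = 0 := by exact_mod_cast (by simpa using h0 : (a : ℝ) = 0)
    simp at hdet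
  rcases hca.lt_or_gt with hneg | hpos
  · refine exists_gaussIter_eq_silver_of_eq_div (A := d) (B := -b) (C := -c) (D := a)
      (by rw [← hdet]; ring_nf) (by push_cast; linarith) ?_
    rw [eq_div_iff (by push_cast; linarith)]
    push_cast
    linear_combination -hα'
  · refine exists_gaussIter_eq_silver_of_eq_div (A := -d) (B := b) (C := c) (D := -a)
      (by rw [← hdet]; ring_nf) (by push_cast; linarith) ?_
    rw [eq_div_iff (by push_cast; linarith)]
    push_cast
    linear_combination hα'

end SqrtTwoClass

section LatticePoints

variable {Q Q' a b : ℤ}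

lemma one_le_abs_silver_mul_sub (hQ : 0 < Q) (hQ' : 0 ≤ Q')
    (hlow : 1 ≤ a * Q + b * Q') (hhigh : a * Q + b * Q' < 2 * Q + Q') :
    1 ≤ |b * (1 + √2) - a| := by
  have hs := sqrt_two_bounds.1
  rcases lt_trichotomy b 0 with hb | rfl | hb
  · have ha : (1 : ℝ) ≤ a := by
      have : 0 < a := by by_contra! ha; nlinarith
      exact_mod_cast this
    have hb : (b : ℝ) ≤ -1 := by exact_mod_cast (show b ≤ -1 by omega)
    rw [abs_sub_comm]
    exact le_trans (by nlinarith) (le_abs_self _)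
  · have ha : (1 : ℝ) ≤ a := by exact_mod_cast (show 1 ≤ a by nlinarith)
    simpa [abs_of_pos (show (0 : ℝ) < a by linarith)] using ha
  · have ha : (a : ℝ) ≤ 1 := by exact_mod_cast (show a ≤ 1 by by_contra! ha; nlinarith)
    have hb : (1 : ℝ) ≤ b := by exact_mod_cast hb
    exact le_trans (by nlinarith) (le_abs_self _)

lemma sqrt_two_le_abs_silver_mul_sub (hQ : 0 < Q) (hQ' : 0 ≤ Q')
    (hlow : 1 ≤ a * Q + b * Q') (hhigh : a * Q + b * Q' < 3 * Q + Q')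
    (hne₁ : ¬(a = 1 ∧ b = 0)) (hne₂ : ¬(a = 2 ∧ b = 1)) :
    √2 ≤ |b * (1 + √2) - a| := by
  have hs := sqrt_two_bounds
  rcases lt_trichotomy b 0 with hb | rfl | hb
  · have ha : (1 : ℝ) ≤ a := by
      have : 0 < a := by by_contra! ha; nlinarith
      exact_mod_cast this
    have hb : (b : ℝ) ≤ -1 := by exact_mod_cast (show b ≤ -1 by omega)
    rw [abs_sub_comm]
    exact le_trans (by nlinarith) (le_abs_self _)
  · have ha : (2 : ℝ) ≤ a := by
      have : 1 ≤ a := by nlinarith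
      exact_mod_cast (show 2 ≤ a by omega)
    rw [abs_sub_comm]
    exact le_trans (by push_cast; linarith) (le_abs_self _)
  · have ha : a ≤ 2 := by by_contra! ha; nlinarith
    rcases eq_or_lt_of_le (show 1 ≤ b from hb) with rfl | hb2
    · have ha : (a : ℝ) ≤ 1 := by exact_mod_cast (show a ≤ 1 by omega)
      exact le_trans (by push_cast; linarith) (le_abs_self _)
    · have ha : (a : ℝ) ≤ 2 := by exact_mod_cast ha
      have hb : (2 : ℝ) ≤ b := by exact_mod_cast hb2
      exact le_trans (by nlinarith) (le_abs_self _)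

end LatticePoints

section MinimaInTail

variable {α : ℝ} {N n : ℕ}

lemma cfXi_succ_le_abs_mul_sub (hα : Irrational α) (hN : gaussIter α N = 1 + √2) (hn : N ≤ n)
    {p q : ℤ} (hq : 1 ≤ q) (hq' : q < cfDen α (n + 2)) : cfXi α (n + 1) ≤ |(q : ℝ) * α - p| := by
  obtain ⟨a, b, hqab, hpab⟩ := exists_eq_add_cfDen_cfNum α n p q
  rw [abs_mul_sub_eq_silver hα hN (by omega) hqab hpab]
  rw [cfDen_succ_succ_of_silver hN (by omega)] at hq'
  have := one_le_abs_silver_mul_sub (one_le_cfDen hα (n + 1)) (by linarith [one_le_cfDen hα n])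
    (hqab ▸ hq) (hqab ▸ hq')
  nlinarith [cfXi_pos hα (n + 1)]

lemma cfXi_sub_cfXi_succ_le_abs_mul_sub (hα : Irrational α) (hN : gaussIter α N = 1 + √2)
    (hn : N ≤ n) {p q : ℤ} (hq : 1 ≤ q) (hq' : q < cfDen α (n + 2) + cfDen α (n + 1))
    (hpq : ∀ k, ¬(p = cfNum α k ∧ q = cfDen α k)) :
    cfXi α n - cfXi α (n + 1) ≤ |(q : ℝ) * α - p| := by
  obtain ⟨a, b, hqab, hpab⟩ := exists_eq_add_cfDen_cfNum α n p q
  rw [abs_mul_sub_eq_silver hα hN (by omega) hqab hpab, cfXi_eq_silver_mul hα hN (by omega)]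
  rw [cfDen_succ_succ_of_silver hN (by omega)] at hq'
  have hne₁ : ¬(a = 1 ∧ b = 0) := by
    rintro ⟨rfl, rfl⟩
    exact hpq (n + 1) ⟨by simpa using hpab, by simpa using hqab⟩
  have hne₂ : ¬(a = 2 ∧ b = 1) := by
    rintro ⟨rfl, rfl⟩
    exact hpq (n + 2) ⟨by rw [hpab, cfNum_succ_succ_of_silver hN (by omega)]; ring,
      by rw [hqab, cfDen_succ_succ_of_silver hN (by omega)]; ring⟩
  have := sqrt_two_le_abs_silver_mul_sub (one_le_cfDen hα (n + 1)) (by linarith [one_le_cfDen hα n])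
    (hqab ▸ hq) (by linarith) hne₁ hne₂
  nlinarith [cfXi_pos hα (n + 1)]

lemma psiFn_eq_cfXi_succ (hα : Irrational α) (hN : gaussIter α N = 1 + √2) (hn : N ≤ n) {t : ℝ}
    (ht : cfDen α (n + 1) ≤ t) (ht' : t < cfDen α (n + 2)) : psiFn α t = cfXi α (n + 1) := by
  refine IsLeast.csInf_eq ⟨⟨_, _, one_le_cfDen hα (n + 1), ht, rfl⟩, ?_⟩
  rintro _ ⟨p, q, hq, hqt, rfl⟩
  exact cfXi_succ_le_abs_mul_sub hα hN hn hq (by exact_mod_cast hqt.trans_lt ht')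

lemma psi2Fn_eq_cfXi_sub_cfXi_succ (hα : Irrational α) (hN : gaussIter α N = 1 + √2)
    (hn : N ≤ n) {t : ℝ} (ht : ((cfDen α (n + 1) + cfDen α n : ℤ) : ℝ) ≤ t)
    (ht' : t < ((cfDen α (n + 2) + cfDen α (n + 1) : ℤ) : ℝ)) :
    psi2Fn α t = cfXi α n - cfXi α (n + 1) := by
  have hmem : cfXi α n - cfXi α (n + 1) ∈ {x : ℝ | ∃ p q : ℤ, 1 ≤ q ∧ (q : ℝ) ≤ t ∧
      (∀ k : ℕ, ¬(p = cfNum α k ∧ q = cfDen α k)) ∧ x = |(q : ℝ) * α - (p : ℝ)|} :=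
    ⟨_, _, by linarith [one_le_cfDen hα n, one_le_cfDen hα (n + 1)], ht,
      fun k hk => cfDen_ne_mediant hα (by rw [cfA_eq_two hN (by omega)]) k hk.2.symm,
      (abs_mediant_mul_sub hα n).symm⟩
  refine IsLeast.csInf_eq ⟨hmem, ?_⟩
  rintro _ ⟨p, q, hq, hqt, hpq, rfl⟩
  exact cfXi_sub_cfXi_succ_le_abs_mul_sub hα hN hn hq (by exact_mod_cast hqt.trans_lt ht') hpq

lemma psi2sFn_eq_cfXi_sub_cfXi_succ (hα : Irrational α) (hN : gaussIter α N = 1 + √2)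
    (hn : N ≤ n) {t : ℝ} (ht : ((cfDen α (n + 1) + cfDen α n : ℤ) : ℝ) ≤ t)
    (ht' : t < ((cfDen α (n + 2) + cfDen α (n + 1) : ℤ) : ℝ)) :
    psi2sFn α t = cfXi α n - cfXi α (n + 1) := by
  have hq₀ : 0 < cfDen α (n + 1) + cfDen α n := by
    linarith [one_le_cfDen hα n, one_le_cfDen hα (n + 1)]
  have hmem : cfXi α n - cfXi α (n + 1) ∈ {x : ℝ | ∃ p q : ℤ, 1 ≤ q ∧ (q : ℝ) ≤ t ∧
      (∀ k : ℕ, (p : ℝ) / (q : ℝ) ≠ (cfNum α k : ℝ) / (cfDen α k : ℝ)) ∧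
      x = |(q : ℝ) * α - (p : ℝ)|} := by
    refine ⟨_, _, hq₀, ht, fun k hk => ?_, (abs_mediant_mul_sub hα n).symm⟩
    -- both fractions are in lowest terms, so equal ratios would make the mediant a convergent
    have := Int.eq_of_div_eq_div_of_isCoprime hq₀ (one_le_cfDen hα k)
      (isCoprime_mediant α n) (isCoprime_cfNum_cfDen α k) (by exact_mod_cast hk)
    exact cfDen_ne_mediant hα (by rw [cfA_eq_two hN (by omega)]) k this.2.symm
  refine IsLeast.csInf_eq ⟨hmem, ?_⟩
  rintro _ ⟨p, q, hq, hqt, hpq, rfl⟩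
  refine cfXi_sub_cfXi_succ_le_abs_mul_sub hα hN hn hq (by exact_mod_cast hqt.trans_lt ht') ?_
  rintro k ⟨rfl, rfl⟩
  exact hpq k rfl

end MinimaInTail

section Limits

lemma tendsto_div_silver_pow {u : ℕ → ℝ} (hu : ∀ k, u (k + 2) = 2 * u (k + 1) + u k) :
    Tendsto (fun k => u k / (1 + √2) ^ k) atTop
      (𝓝 ((u 1 - (1 - √2) * u 0) / (2 * √2))) := by
  have hsq := Real.sq_sqrt zero_le_two
  obtain ⟨A, hA⟩ : ∃ A, A = (u 1 - (1 - √2) * u 0) / (2 * √2) := ⟨_, rfl⟩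
  obtain ⟨B, hB⟩ : ∃ B, B = ((1 + √2) * u 0 - u 1) / (2 * √2) := ⟨_, rfl⟩
  -- Binet's formula for the Pell recurrence, whose characteristic roots are `1 ± √2`
  have hbinet : ∀ k, u k = A * (1 + √2) ^ k + B * (1 - √2) ^ k := by
    intro k
    induction k using Nat.twoStepInduction with
    | zero => rw [hA, hB]; field_simp; ring
    | one => rw [hA, hB]; field_simp; ring
    | more k ih₀ ih₁ =>
      rw [hu, ih₀, ih₁]
      linear_combination (-(A * (1 + √2) ^ k + B * (1 - √2) ^ k)) * hsq
  have hratio : |(1 - √2) / (1 + √2)| < 1 := by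
    rw [abs_div, div_lt_one (by positivity), abs_lt]
    constructor <;> linarith [abs_of_pos (show 0 < 1 + √2 by positivity), sqrt_two_bounds]
  have hlim := ((tendsto_pow_atTop_nhds_zero_of_abs_lt_one hratio).const_mul B).const_add A
  rw [mul_zero, add_zero] at hlim
  rw [← hA]
  refine hlim.congr fun k => ?_
  rw [hbinet k, div_pow]
  field_simp

variable {α : ℝ} {N : ℕ}

lemma tendsto_cfDen_mul_cfXi (hα : Irrational α) (hN : gaussIter α N = 1 + √2) :
    Tendsto (fun n => (cfDen α n : ℝ) * cfXi α n) atTop (𝓝 (1 / √8)) := by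
  have hxi : ∀ k, cfXi α (N + k) = cfXi α N / (1 + √2) ^ k := by
    intro k
    induction k with
    | zero => simp
    | succ k ih =>
      rw [pow_succ, div_mul_eq_div_div, ← ih, ← add_assoc,
        cfXi_eq_silver_mul hα hN (n := N + k) (by omega)]
      field_simp
  have hq := tendsto_div_silver_pow (u := fun k => (cfDen α (N + k) : ℝ)) fun k => by
    show (cfDen α (N + k + 2) : ℝ) = 2 * cfDen α (N + k + 1) + cfDen α (N + k)
    exact_mod_cast cfDen_succ_succ_of_silver hN (by omega)
  have hlim : cfXi α N * (((cfDen α (N + 1) : ℝ) - (1 - √2) * cfDen α (N + 0)) / (2 * √2)) =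
      1 / √8 := by
    have h1 := cfXi_mul_eq_one hα N
    rw [gaussIter_eq_silver_of_le hN N.le_succ] at h1
    rw [add_zero, cfDen_succ, cfA_eq_two hN N.le_succ, sqrt_eight]
    push_cast
    field_simp
    linear_combination h1
  rw [← tendsto_add_atTop_iff_nat N, ← hlim]
  refine (hq.const_mul (cfXi α N)).congr fun k => ?_
  rw [add_comm k N, hxi]
  ring

lemma tendsto_mediant_mul_cfXi_sub (hα : Irrational α) (hN : gaussIter α N = 1 + √2) :
    Tendsto (fun n => ((cfDen α (n + 1) + cfDen α n : ℤ) : ℝ) * (cfXi α n - cfXi α (n + 1)))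
      atTop (𝓝 (1 / √2)) := by
  have hσ := tendsto_cfDen_mul_cfXi hα hN
  have hlim := ((tendsto_add_atTop_iff_nat 1).2 hσ).add (hσ.const_mul (√2 - 1)) |>.const_mul √2
  have hsq := Real.sq_sqrt zero_le_two
  rw [show √2 * (1 / √8 + (√2 - 1) * (1 / √8)) = 1 / √2 by
    rw [sqrt_eight]; field_simp; linear_combination hsq] at hlim
  refine hlim.congr' ?_
  filter_upwards [eventually_ge_atTop N] with n hn
  have h := cfXi_eq_silver_mul hα hN (n := n) (by omega)
  rw [h]
  push_cast
  linear_combination ((cfDen α n : ℝ) * cfXi α (n + 1) * √2) * hsq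

end Limits

section Liminfs

variable {α : ℝ} {N : ℕ}

lemma lamOf_eq_of_silver (hα : Irrational α) (hN : gaussIter α N = 1 + √2) :
    lamOf α = 1 / √8 := by
  refine liminf_mul_eq_of_step (s := fun n => cfDen α (n + 1)) (v := fun n => cfXi α (n + 1))
    (strictMono_nat_of_lt_succ fun n => by exact_mod_cast cfDen_succ_lt_cfDen_succ_succ hα n)
    ((tendsto_cfDen_atTop hα).comp (tendsto_add_atTop_nat 1)) ?_
    ((tendsto_add_atTop_iff_nat 1).2 (tendsto_cfDen_mul_cfXi hα hN))
  filter_upwards [eventually_ge_atTop N] with n hn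
  exact ⟨(cfXi_pos hα _).le, fun t ht ht' => psiFn_eq_cfXi_succ hα hN hn ht ht'⟩

lemma strictMono_mediant_cfDen (hα : Irrational α) :
    StrictMono fun n => (((cfDen α (n + 1) + cfDen α n : ℤ)) : ℝ) :=
  strictMono_nat_of_lt_succ fun n => by
    have := cfDen_add_cfDen_le hα n
    have := one_le_cfDen hα (n + 1)
    exact_mod_cast (by linarith : cfDen α (n + 1) + cfDen α n < cfDen α (n + 2) + cfDen α (n + 1))

lemma tendsto_mediant_cfDen_atTop (hα : Irrational α) :
    Tendsto (fun n => (((cfDen α (n + 1) + cfDen α n : ℤ)) : ℝ)) atTop atTop :=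
  tendsto_atTop_mono (fun n => by
      have : (1 : ℝ) ≤ cfDen α n := by exact_mod_cast one_le_cfDen hα n
      push_cast
      simp only [Function.comp_apply]
      linarith)
    ((tendsto_cfDen_atTop hα).comp (tendsto_add_atTop_nat 1))

lemma kOf_eq_of_silver (hα : Irrational α) (hN : gaussIter α N = 1 + √2) :
    kOf α = 1 / √2 := by
  refine liminf_mul_eq_of_step (v := fun n => cfXi α n - cfXi α (n + 1))
    (strictMono_mediant_cfDen hα) (tendsto_mediant_cfDen_atTop hα) ?_
    (tendsto_mediant_mul_cfXi_sub hα hN)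
  filter_upwards [eventually_ge_atTop N] with n hn
  exact ⟨sub_nonneg.2 (cfXi_strictAnti hα n.lt_succ_self).le,
    fun t ht ht' => psi2Fn_eq_cfXi_sub_cfXi_succ hα hN hn ht ht'⟩

lemma ksOf_eq_of_silver (hα : Irrational α) (hN : gaussIter α N = 1 + √2) :
    ksOf α = 1 / √2 := by
  refine liminf_mul_eq_of_step (v := fun n => cfXi α n - cfXi α (n + 1))
    (strictMono_mediant_cfDen hα) (tendsto_mediant_cfDen_atTop hα) ?_
    (tendsto_mediant_mul_cfXi_sub hα hN)
  filter_upwards [eventually_ge_atTop N] with n hn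
  exact ⟨sub_nonneg.2 (cfXi_strictAnti hα n.lt_succ_self).le,
    fun t ht ht' => psi2sFn_eq_cfXi_sub_cfXi_succ hα hN hn ht ht'⟩

end Liminfs

/-- If `α` is irrational and equivalent to `√2`, then
`𝔨*(α) = 𝔨(α) = 2·λ(α)`; in particular `λ(√2) = 1/√8` and `𝔨(√2) = 𝔨*(√2) = 1/√2`. -/
theorem stmt1 :
    (∀ α : ℝ, Irrational α → CFEquiv α (Real.sqrt 2) →
      ksOf α = kOf α ∧ kOf α = 2 * lamOf α) ∧
    lamOf (Real.sqrt 2) = 1 / Real.sqrt 8 ∧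
    kOf (Real.sqrt 2) = 1 / Real.sqrt 2 ∧
    ksOf (Real.sqrt 2) = 1 / Real.sqrt 2 := by
  have hclass : ∀ α, Irrational α → CFEquiv α √2 →
      lamOf α = 1 / √8 ∧ kOf α = 1 / √2 ∧ ksOf α = 1 / √2 := by
    intro α hα h
    obtain ⟨N, hN⟩ := exists_gaussIter_eq_silver h
    exact ⟨lamOf_eq_of_silver hα hN, kOf_eq_of_silver hα hN, ksOf_eq_of_silver hα hN⟩
  refine ⟨fun α hα h => ?_, hclass _ irrational_sqrt_two ⟨1, 0, 0, 1, by norm_num, by simp⟩⟩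
  obtain ⟨hlam, hk, hks⟩ := hclass α hα h
  refine ⟨hks.trans hk.symm, ?_⟩
  rw [hk, hlam, sqrt_eight]
  field_simp
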